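/- Define G(s) = σ²cos(sν) - σν sin(sν) + ν²e^{sσ} for fixed σ, ν > 0. Then G(s) < G(0) for all s < 0. -/

import Mathlib

/-!
Put `t = -s`, `a = tσ`, `x = tν`. Then
`t² (G 0 - G s) = a² (1 - cos x) + x² (1 - e^{-a}) - a x sin x`, so it suffices to show that
this is positive for `a, x > 0`. With `ρ = √(a² + x²)`:
if `ρ ≥ 1`, bound `a cos x + x sin x ≤ ρ` by Cauchy–Schwarz and use `(1 + a) e^{-a} < 1`;
if `ρ ≤ 1`, then `a, x ≤ 1` and the Taylor bounds `cos x ≤ 1 - x²/2 + O(x⁴)`,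
`sin x ≤ x - x³/6 + O(x⁵)` and `e^{-a} ≤ 1 - a + a²/2` suffice.
-/

open Real

theorem Real.mul_cos_add_mul_sin_le_sqrt (a b θ : ℝ) :
    a * cos θ + b * sin θ ≤ √(a ^ 2 + b ^ 2) :=
  (le_abs_self _).trans <| Real.abs_le_sqrt <| by
    nlinarith [sq_nonneg (a * sin θ - b * cos θ), sin_sq_add_cos_sq θ]

theorem Real.one_add_mul_exp_neg_lt_one {a : ℝ} (ha : a ≠ 0) : (1 + a) * exp (-a) < 1 := by
  rw [exp_neg, ← div_eq_mul_inv, div_lt_one (exp_pos a)]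
  linarith [add_one_lt_exp ha]

theorem Real.exp_neg_le_one_sub_add_sq_div_two {a : ℝ} (ha : 0 ≤ a) :
    exp (-a) ≤ 1 - a + a ^ 2 / 2 := by
  have hcubic : 1 + a + a ^ 2 / 2 + a ^ 3 / 6 ≤ exp a := by
    simpa [Finset.sum_range_succ, Nat.factorial] using sum_le_exp_of_nonneg ha 4
  -- `(1 - a + a²/2) (1 + a + a²/2 + a³/6) = 1 + a³/6 + a⁴/12 + a⁵/12`
  rw [exp_neg, inv_le_iff_one_le_mul₀ (exp_pos a)]
  nlinarith [mul_le_mul_of_nonneg_left hcubic (by nlinarith : (0 : ℝ) ≤ 1 - a + a ^ 2 / 2),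
    pow_nonneg ha 3, pow_nonneg ha 4, pow_nonneg ha 5]

theorem mul_mul_sin_lt_of_one_le_sq_add_sq {a x : ℝ} (ha : 0 < a) (hx : 0 < x)
    (h : 1 ≤ a ^ 2 + x ^ 2) :
    a * x * sin x < a ^ 2 * (1 - cos x) + x ^ 2 * (1 - exp (-a)) := by
  set ρ := √(a ^ 2 + x ^ 2)
  have hρ2 : ρ ^ 2 = a ^ 2 + x ^ 2 := sq_sqrt (by positivity)
  have hρ1 : 1 ≤ ρ := by rw [← one_le_sq_iff₀ (sqrt_nonneg _), hρ2]; exact h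
  have hρa : a < ρ := by nlinarith
  have htrig := mul_le_mul_of_nonneg_left (mul_cos_add_mul_sin_le_sqrt a x x) ha.le
  -- `x² = (ρ - a)(ρ + a)` and `ρ + a ≤ ρ (1 + a)`
  have hx2 : x ^ 2 ≤ ρ * (ρ - a) * (1 + a) := by
    nlinarith [mul_nonneg (mul_nonneg (sub_nonneg.2 hρa.le) ha.le) (sub_nonneg.2 hρ1)]
  have hexp : x ^ 2 * exp (-a) < ρ * (ρ - a) := calc
    x ^ 2 * exp (-a) ≤ ρ * (ρ - a) * ((1 + a) * exp (-a)) := by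
      nlinarith [mul_le_mul_of_nonneg_right hx2 (exp_pos (-a)).le]
    _ < ρ * (ρ - a) := mul_lt_of_lt_one_right (by nlinarith) (one_add_mul_exp_neg_lt_one ha.ne')
  nlinarith

theorem mul_mul_sin_lt_of_le_one {a x : ℝ} (ha : 0 < a) (hx : 0 < x) (ha1 : a ≤ 1)
    (hx1 : x ≤ 1) :
    a * x * sin x < a ^ 2 * (1 - cos x) + x ^ 2 * (1 - exp (-a)) := by
  have hxabs : |x| = x := abs_of_pos hx
  have hcos : cos x ≤ 1 - x ^ 2 / 2 + x ^ 4 * (5 / 96) := by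
    have := (abs_le.mp (cos_bound (hxabs ▸ hx1))).2
    rw [hxabs] at this; linarith
  have hsin : sin x ≤ x - x ^ 3 / 6 + x ^ 5 / 100 := by
    have := (abs_le.mp (sin_bound (hxabs ▸ hx1))).2
    rw [hxabs] at this; linarith
  have hexp := exp_neg_le_one_sub_add_sq_div_two ha.le
  -- the three bounds leave `a x⁴ (1/6 - x²/100 - 5a/96) > 0`
  have hgap : 0 < a * x ^ 4 * (1 / 6 - x ^ 2 / 100 - 5 * a / 96) := by
    have : 0 < 1 / 6 - x ^ 2 / 100 - 5 * a / 96 := by nlinarith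
    positivity
  nlinarith [mul_le_mul_of_nonneg_left hcos (sq_nonneg a),
    mul_le_mul_of_nonneg_left hexp (sq_nonneg x),
    mul_le_mul_of_nonneg_left hsin (mul_pos ha hx).le]

theorem mul_mul_sin_lt {a x : ℝ} (ha : 0 < a) (hx : 0 < x) :
    a * x * sin x < a ^ 2 * (1 - cos x) + x ^ 2 * (1 - exp (-a)) := by
  rcases le_total 1 (a ^ 2 + x ^ 2) with h | h
  · exact mul_mul_sin_lt_of_one_le_sq_add_sq ha hx h
  · exact mul_mul_sin_lt_of_le_one ha hx (by nlinarith) (by nlinarith)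

theorem stmt3 (σ ν : ℝ) (hσ : 0 < σ) (hν : 0 < ν) (G : ℝ → ℝ)
    (hG : ∀ s, G s = σ ^ 2 * Real.cos (s * ν) - σ * ν * Real.sin (s * ν) +
      ν ^ 2 * Real.exp (s * σ)) :
    ∀ s < 0, G s < G 0 := by
  intro s hs
  have hkey := mul_mul_sin_lt (mul_pos (neg_pos.2 hs) hσ) (mul_pos (neg_pos.2 hs) hν)
  have hscale : s ^ 2 * (G 0 - G s) = (-s * σ) ^ 2 * (1 - cos (-s * ν))
      + (-s * ν) ^ 2 * (1 - exp (-(-s * σ))) - -s * σ * (-s * ν) * sin (-s * ν) := by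
    simp only [hG, zero_mul, cos_zero, sin_zero, exp_zero, neg_mul, neg_neg, cos_neg, sin_neg]
    ring
  have : 0 < s ^ 2 * (G 0 - G s) := by linarith
  linarith [(mul_pos_iff_of_pos_left (sq_pos_of_neg hs)).mp this]
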